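/- arXiv:2111.01863 — 7 statements merged into one kernel-verified Lean document; each statement's English description precedes it below -/
import Mathlib

section
/- Let n ≥ 2 and let ⟨d,k,m⟩ and ⟨d',k',m'⟩ be two nonzero elements of M_n. Set d'' = d + d', k'' = max(k, k' − d), m'' = min(m, m' − d). Then 1 − min(0,d'') ≤ k'' and m'' ≤ n − max(0,d''); moreover the matrix product ⟨d,k,m⟩·⟨d',k',m'⟩ equals ⟨d'',k'',m''⟩ if k'' ≤ m'', and equals the n×n zero matrix if k'' > m''. In particular, M_n is closed under matrix multiplication. -/
open Matrix

/-- The n×n matrix ⟨d,k,m⟩: entry (i,j) (rows/columns numbered 1..n, here i.val+1, j.val+1)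
equals 1 if k ≤ i ≤ m and j = i + d, and 0 otherwise. -/
def tripMat (n : ℕ) (d k m : ℤ) : Matrix (Fin n) (Fin n) ℕ :=
  Matrix.of fun i j =>
    if k ≤ (i.val : ℤ) + 1 ∧ (i.val : ℤ) + 1 ≤ m ∧ (j.val : ℤ) + 1 = (i.val : ℤ) + 1 + d
    then 1 else 0

/-- The monoid M_n, as a set of n×n matrices: the zero matrix together with all
matrices ⟨d,k,m⟩ with 1 - min(0,d) ≤ k ≤ m ≤ n - max(0,d). -/
def MSet (n : ℕ) : Set (Matrix (Fin n) (Fin n) ℕ) :=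
  {0} ∪ {x | ∃ d k m : ℤ,
    1 - min 0 d ≤ k ∧ k ≤ m ∧ m ≤ (n : ℤ) - max 0 d ∧ x = tripMat n d k m}

lemma trip_zero (n : ℕ) (d k m : ℤ) (h : m < k) : tripMat n d k m = 0 := by
  ext i j
  simp only [tripMat, Matrix.of_apply, Matrix.zero_apply]
  rw [if_neg]; omega

lemma mul_trip (n : ℕ) (d k m d' k' m' : ℤ) (hk' : 1 ≤ k') (hm' : m' ≤ (n : ℤ)) :
    tripMat n d k m * tripMat n d' k' m' =
      tripMat n (d + d') (max k (k' - d)) (min m (m' - d)) := by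
  ext i j
  simp only [Matrix.mul_apply, tripMat, Matrix.of_apply, ite_mul, one_mul, zero_mul]
  by_cases C : max k (k' - d) ≤ (i.val : ℤ) + 1 ∧ (i.val : ℤ) + 1 ≤ min m (m' - d) ∧
      (j.val : ℤ) + 1 = (i.val : ℤ) + 1 + (d + d')
  · have hbd : 0 ≤ (i.val : ℤ) + d ∧ (i.val : ℤ) + d < (n : ℤ) := by omega
    have hlt : ((i.val : ℤ) + d).toNat < n := by omega
    set l0 : Fin n := ⟨((i.val : ℤ) + d).toNat, hlt⟩ with hl0
    have hl0v : (l0.val : ℤ) = (i.val : ℤ) + d := by simp [hl0]; omega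
    rw [if_pos C, Finset.sum_eq_single l0]
    · rw [if_pos, if_pos]
      · omega
      · omega
    · intro l _ hne
      rw [if_neg]
      intro ⟨_, _, h3⟩
      exact hne (Fin.ext (by omega))
    · intro h; exact absurd (Finset.mem_univ l0) h
  · rw [if_neg C, Finset.sum_eq_zero]
    intro l _
    split_ifs with hA hB
    · exfalso; apply C
      obtain ⟨a1, a2, a3⟩ := hA
      obtain ⟨b1, b2, b3⟩ := hB
      omega
    · rfl
    · rfl

/-- multiplication formula in M_n and closure of M_n under multiplication. -/
theorem stmt_0 (n : ℕ) (hn : 2 ≤ n) (d k m d' k' m' : ℤ)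
    (h1 : 1 - min 0 d ≤ k) (h2 : k ≤ m) (h3 : m ≤ (n : ℤ) - max 0 d)
    (h1' : 1 - min 0 d' ≤ k') (h2' : k' ≤ m') (h3' : m' ≤ (n : ℤ) - max 0 d') :
    1 - min 0 (d + d') ≤ max k (k' - d) ∧
    min m (m' - d) ≤ (n : ℤ) - max 0 (d + d') ∧
    (max k (k' - d) ≤ min m (m' - d) →
      tripMat n d k m * tripMat n d' k' m' =
        tripMat n (d + d') (max k (k' - d)) (min m (m' - d))) ∧
    (min m (m' - d) < max k (k' - d) → tripMat n d k m * tripMat n d' k' m' = 0) ∧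
    (∀ x ∈ MSet n, ∀ y ∈ MSet n, x * y ∈ MSet n) := by
  refine ⟨by omega, by omega, fun _ => mul_trip n d k m d' k' m' (by omega) (by omega),
    fun h => ?_, ?_⟩
  · rw [mul_trip n d k m d' k' m' (by omega) (by omega)]
    exact trip_zero _ _ _ _ h
  · rintro x (rfl | ⟨a, b, c, hb1, hb2, hb3, rfl⟩) y hy
    · left; simp
    obtain (rfl | ⟨a', b', c', hb1', hb2', hb3', rfl⟩) := hy
    · left; simp
    rw [mul_trip n a b c a' b' c' (by omega) (by omega)]
    by_cases hbc : max b (b' - a) ≤ min c (c' - a)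
    · right
      exact ⟨a + a', max b (b' - a), min c (c' - a), by omega, hbc, by omega, rfl⟩
    · left
      exact trip_zero _ _ _ _ (by omega)
end

section
/- Let n ≥ 2 and let x = ⟨d,k,m⟩ and y = ⟨d',k',m'⟩ be two nonzero elements of M_n, and set k'' = max(k, k' − d), m'' = min(m, m' − d). Then the matrix product xy is nonzero if and only if k'' ≤ m'', which holds if and only if k' − m ≤ d ≤ m' − k. -/
open Matrix

/-- the product of two nonzero elements of M_n is nonzero iff
k'' ≤ m'' iff k' − m ≤ d ≤ m' − k. -/
theorem stmt_1 (n : ℕ) (hn : 2 ≤ n) (d k m d' k' m' : ℤ)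
    (h1 : 1 - min 0 d ≤ k) (h2 : k ≤ m) (h3 : m ≤ (n : ℤ) - max 0 d)
    (h1' : 1 - min 0 d' ≤ k') (h2' : k' ≤ m') (h3' : m' ≤ (n : ℤ) - max 0 d') :
    (tripMat n d k m * tripMat n d' k' m' ≠ 0 ↔ max k (k' - d) ≤ min m (m' - d)) ∧
    (max k (k' - d) ≤ min m (m' - d) ↔ k' - m ≤ d ∧ d ≤ m' - k) := by
  constructor
  · constructor
    · intro hne
      by_contra hle
      apply hne
      ext i j
      simp only [Matrix.mul_apply, Matrix.zero_apply]
      apply Finset.sum_eq_zero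
      intro l _
      simp only [tripMat, Matrix.of_apply]
      split_ifs with hx hy hy
      · exfalso; omega
      · simp
      · simp
      · simp
    · intro hle hz
      set t := max k (k' - d) with ht
      have htk : 1 ≤ t := by omega
      have htn : t ≤ (n : ℤ) := by omega
      have htd1 : 1 ≤ t + d := by omega
      have htd2 : t + d ≤ (n : ℤ) := by omega
      have htdd1 : 1 ≤ t + d + d' := by omega
      have htdd2 : t + d + d' ≤ (n : ℤ) := by omega
      set i : Fin n := ⟨(t - 1).toNat, by omega⟩
      set l : Fin n := ⟨(t + d - 1).toNat, by omega⟩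
      set j : Fin n := ⟨(t + d + d' - 1).toNat, by omega⟩
      have hi : (i.val : ℤ) = t - 1 := by simp [i]; omega
      have hl : (l.val : ℤ) = t + d - 1 := by simp [l]; omega
      have hj : (j.val : ℤ) = t + d + d' - 1 := by simp [j]; omega
      have h0 : (tripMat n d k m * tripMat n d' k' m') i j = 0 := by
        rw [hz]; rfl
      rw [Matrix.mul_apply] at h0
      rw [Finset.sum_eq_zero_iff] at h0
      have := h0 l (Finset.mem_univ l)
      simp only [tripMat, Matrix.of_apply, hi, hl, hj] at this
      rw [if_pos (by constructor <;> [omega; constructor <;> omega]),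
        if_pos (by constructor <;> [omega; constructor <;> omega])] at this
      exact one_ne_zero this
  · constructor <;> intro h <;> omega
end

section
/- Let n ≥ 2, let x = ⟨d,k,m⟩ be a nonzero element of M_n, and let j be a positive integer such that the matrix power x^j is nonzero. Then the number of entries of x^j equal to 1 (equivalently, the sum of all entries of x^j) equals m − k + 1 − (j−1)·|d|. -/
open Matrix

lemma tripMat_mul (n : ℕ) (d k m d' k' m' : ℤ)
    (h1' : 1 - min 0 d' ≤ k') (h3' : m' ≤ (n:ℤ) - max 0 d') :
    tripMat n d k m * tripMat n d' k' m' =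
      tripMat n (d+d') (max k (k'-d)) (min m (m'-d)) := by
  ext i i'
  simp only [Matrix.mul_apply, tripMat, Matrix.of_apply]
  by_cases h : max k (k'-d) ≤ (i.val:ℤ)+1 ∧ (i.val:ℤ)+1 ≤ min m (m'-d) ∧
      (i'.val:ℤ)+1 = (i.val:ℤ)+1+(d+d')
  · rw [if_pos h]
    obtain ⟨ha, hb, hc⟩ := h
    have hi := i.isLt
    have hi' := i'.isLt
    have hl2 : ((i.val:ℤ)+d).toNat < n := by omega
    set l : Fin n := ⟨((i.val:ℤ)+d).toNat, hl2⟩ with hldef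
    have hlv : ((l.val:ℤ)) = (i.val:ℤ) + d := by simp [hldef]; omega
    rw [Finset.sum_eq_single l]
    · rw [if_pos (by omega), if_pos (by omega)]
    · intro b _ hb'
      have hbv := b.isLt
      rw [if_neg, zero_mul]
      rintro ⟨-, -, hbc⟩
      exact hb' (Fin.ext (by omega))
    · intro habs; exact absurd (Finset.mem_univ l) habs
  · rw [if_neg h]
    push_neg at h
    apply Finset.sum_eq_zero
    intro l _
    have hi := i.isLt
    have hl := l.isLt
    have hi' := i'.isLt
    by_cases hA : k ≤ (i.val:ℤ)+1 ∧ (i.val:ℤ)+1 ≤ m ∧ (l.val:ℤ)+1 = (i.val:ℤ)+1+d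
    · rw [if_pos hA, one_mul]
      rw [if_neg]
      rintro ⟨hq1, hq2, hq3⟩
      obtain ⟨a1, a2, a3⟩ := hA
      omega
    · rw [if_neg hA, zero_mul]

lemma tripMat_pow (n : ℕ) (d k m : ℤ) (h1 : 1 - min 0 d ≤ k)
    (h3 : m ≤ (n:ℤ) - max 0 d) (j : ℕ) (hj : 1 ≤ j) :
    tripMat n d k m ^ j =
      tripMat n ((j:ℤ)*d) (k + ((j:ℤ)-1)*max 0 (-d)) (m - ((j:ℤ)-1)*max 0 d) := by
  induction j with
  | zero => omega
  | succ j ih =>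
    rcases Nat.eq_or_lt_of_le hj with h | h
    · simp [← h]
    · have hj1 : 1 ≤ j := by omega
      rw [pow_succ, ih hj1, tripMat_mul n _ _ _ d k m h1 h3]
      have e1 : (j:ℤ)*d + d = ((j+1 : ℕ):ℤ)*d := by push_cast; ring
      have e2 : max (k + ((j:ℤ)-1)*max 0 (-d)) (k - (j:ℤ)*d)
          = k + (((j+1:ℕ):ℤ)-1)*max 0 (-d) := by
        rcases le_total 0 d with hd | hd
        · have hin : (0:ℤ) ⊔ -d = 0 := max_eq_left (by linarith)
          rw [hin, max_eq_left]
          · push_cast; ring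
          · have : 0 ≤ (j:ℤ)*d := mul_nonneg (by positivity) hd
            linarith
        · have hin : (0:ℤ) ⊔ -d = -d := max_eq_right (by linarith)
          rw [hin, max_eq_right]
          · push_cast; ring
          · have : ((j:ℤ)-1)*(-d) ≤ (j:ℤ)*(-d) := by
              apply mul_le_mul_of_nonneg_right (by linarith) (by linarith)
            linarith
      have e3 : min (m - ((j:ℤ)-1)*max 0 d) (m - (j:ℤ)*d)
          = m - (((j+1:ℕ):ℤ)-1)*max 0 d := by
        rcases le_total 0 d with hd | hd
        · have hin : (0:ℤ) ⊔ d = d := max_eq_right hd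
          rw [hin, min_eq_right]
          · push_cast; ring
          · have : ((j:ℤ)-1)*d ≤ (j:ℤ)*d := by
              apply mul_le_mul_of_nonneg_right (by linarith) hd
            linarith
        · have hin : (0:ℤ) ⊔ d = 0 := max_eq_left (by linarith)
          rw [hin, min_eq_left]
          · push_cast; ring
          · have : (j:ℤ)*d ≤ 0 := mul_nonpos_of_nonneg_of_nonpos (by positivity) hd
            linarith
      rw [e1, e2, e3]

lemma tripMat_eq_zero (n : ℕ) (D K M : ℤ) (h : M < K) : tripMat n D K M = 0 := by
  ext i i'
  simp only [tripMat, Matrix.of_apply, Matrix.zero_apply]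
  rw [if_neg]
  rintro ⟨a, b, -⟩
  omega

lemma tripMat_sum (n : ℕ) (D K M : ℤ) (h1 : 1 - min 0 D ≤ K) (h2 : K ≤ M)
    (h3 : M ≤ (n:ℤ) - max 0 D) :
    ((∑ i : Fin n, ∑ i' : Fin n, tripMat n D K M i i' : ℕ) : ℤ) = M - K + 1 := by
  have hrow : ∀ i : Fin n, (∑ i' : Fin n, tripMat n D K M i i')
      = if K ≤ (i.val:ℤ)+1 ∧ (i.val:ℤ)+1 ≤ M then 1 else 0 := by
    intro i
    have hi := i.isLt
    by_cases hK : K ≤ (i.val:ℤ)+1 ∧ (i.val:ℤ)+1 ≤ M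
    · rw [if_pos hK]
      have hl2 : ((i.val:ℤ)+D).toNat < n := by omega
      set l : Fin n := ⟨((i.val:ℤ)+D).toNat, hl2⟩ with hldef
      have hlv : ((l.val:ℤ)) = (i.val:ℤ) + D := by simp [hldef]; omega
      rw [Finset.sum_eq_single l]
      · simp only [tripMat, Matrix.of_apply]
        rw [if_pos ⟨hK.1, hK.2, by omega⟩]
      · intro b _ hb'
        have hbv := b.isLt
        simp only [tripMat, Matrix.of_apply]
        rw [if_neg]
        rintro ⟨-, -, hbc⟩
        exact hb' (Fin.ext (by omega))
      · intro habs; exact absurd (Finset.mem_univ _) habs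
    · rw [if_neg hK]
      apply Finset.sum_eq_zero
      intro l _
      simp only [tripMat, Matrix.of_apply]
      rw [if_neg]
      rintro ⟨a, b, -⟩
      exact hK ⟨a, b⟩
  calc ((∑ i : Fin n, ∑ i' : Fin n, tripMat n D K M i i' : ℕ) : ℤ)
      = ((∑ i : Fin n, if K ≤ (i.val:ℤ)+1 ∧ (i.val:ℤ)+1 ≤ M then 1 else 0 : ℕ) : ℤ) := by
        congr 1; exact Finset.sum_congr rfl (fun i _ => hrow i)
    _ = M - K + 1 := by
        have : (∑ i : Fin n, if K ≤ (i.val:ℤ)+1 ∧ (i.val:ℤ)+1 ≤ M then 1 else 0 : ℕ)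
            = ((Finset.range n).filter (fun x => (K-1).toNat ≤ x ∧ x < M.toNat)).card := by
          rw [Finset.card_filter, ← Fin.sum_univ_eq_sum_range]
          apply Finset.sum_congr rfl
          intro i _
          have hi := i.isLt
          congr 1
          simp only [eq_iff_iff]
          constructor
          · rintro ⟨a, b⟩; omega
          · rintro ⟨a, b⟩; omega
        rw [this]
        have hfe : (Finset.range n).filter (fun x => (K-1).toNat ≤ x ∧ x < M.toNat)
            = Finset.Ico (K-1).toNat M.toNat := by
          ext x
          simp only [Finset.mem_filter, Finset.mem_range, Finset.mem_Ico]
          omega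
        rw [hfe, Nat.card_Ico]
        omega

/-- if x = ⟨d,k,m⟩ is a nonzero element of M_n and x^j ≠ 0 (j ≥ 1), then
the number of ones in x^j, i.e. the sum of all its entries, equals m − k + 1 − (j−1)|d|. -/
theorem stmt_3 (n : ℕ) (hn : 2 ≤ n) (d k m : ℤ)
    (h1 : 1 - min 0 d ≤ k) (h2 : k ≤ m) (h3 : m ≤ (n : ℤ) - max 0 d)
    (j : ℕ) (hj : 1 ≤ j) (hnz : tripMat n d k m ^ j ≠ 0) :
    ((∑ i : Fin n, ∑ i' : Fin n, (tripMat n d k m ^ j) i i' : ℕ) : ℤ) =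
      m - k + 1 - ((j : ℤ) - 1) * |d| := by
  rw [tripMat_pow n d k m h1 h3 j hj] at hnz ⊢
  set K := k + ((j:ℤ)-1)*max 0 (-d) with hK
  set M := m - ((j:ℤ)-1)*max 0 d with hM
  have hKM : K ≤ M := by
    by_contra hc
    exact hnz (tripMat_eq_zero n _ _ _ (by omega))
  have habs : max 0 (-d) + max 0 d = |d| := by
    rcases le_total 0 d with hd | hd
    · rw [max_eq_right hd, max_eq_left (by linarith), abs_of_nonneg hd]; ring
    · rw [max_eq_left hd, max_eq_right (by linarith), abs_of_nonpos hd]; ring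
  have hj1 : (0:ℤ) ≤ (j:ℤ) - 1 := by
    have : (1:ℤ) ≤ (j:ℤ) := by exact_mod_cast hj
    linarith
  have hK1 : 1 - min 0 ((j:ℤ)*d) ≤ K := by
    rcases le_total 0 d with hd | hd
    · have h0 : 0 ≤ (j:ℤ)*d := mul_nonneg (by positivity) hd
      rw [min_eq_left h0]
      have : max 0 (-d) = 0 := max_eq_left (by linarith)
      rw [hK, this]
      omega
    · have h0 : (j:ℤ)*d ≤ 0 := mul_nonpos_of_nonneg_of_nonpos (by positivity) hd
      rw [min_eq_right h0]
      have : max 0 (-d) = -d := max_eq_right (by linarith)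
      rw [hK, this]
      have hmin : min 0 d = d := min_eq_right hd
      rw [hmin] at h1
      nlinarith
  have hM1 : M ≤ (n:ℤ) - max 0 ((j:ℤ)*d) := by
    rcases le_total 0 d with hd | hd
    · have h0 : 0 ≤ (j:ℤ)*d := mul_nonneg (by positivity) hd
      rw [max_eq_right h0]
      have hmx : max 0 d = d := max_eq_right hd
      rw [hM, hmx]
      rw [hmx] at h3
      nlinarith
    · have h0 : (j:ℤ)*d ≤ 0 := mul_nonpos_of_nonneg_of_nonpos (by positivity) hd
      rw [max_eq_left h0]
      have : max 0 d = 0 := max_eq_left (by linarith)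
      rw [hM, this]
      omega
  rw [tripMat_sum n _ _ _ hK1 hKM hM1, hK, hM]
  have : ((j:ℤ)-1) * |d| = ((j:ℤ)-1)*max 0 (-d) + ((j:ℤ)-1)*max 0 d := by
    rw [← mul_add, habs]
  linarith
end

section
/- Let n ≥ 2 and let x = ⟨d,k,m⟩ be a nonzero element of M_n. If d = 0 then x is idempotent (x² = x). If d ≠ 0 then x is nilpotent with nilpotency index ℓ = 1 + ⌈(m − k + 1)/|d|⌉, i.e., x^ℓ = 0 and x^(ℓ−1) ≠ 0; moreover 2 ≤ ℓ ≤ n. -/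
open Matrix

lemma tripMat_apply (n : ℕ) (d k m : ℤ) (i j : Fin n) :
    tripMat n d k m i j =
      if k ≤ (i.val : ℤ) + 1 ∧ (i.val : ℤ) + 1 ≤ m ∧ (j.val : ℤ) + 1 = (i.val : ℤ) + 1 + d
      then 1 else 0 := rfl

lemma tripMat_pow_apply (n : ℕ) (d k m : ℤ)
    (h1 : 1 - min 0 d ≤ k) (h3 : m ≤ (n : ℤ) - max 0 d) (t : ℕ) (i j : Fin n) :
    (tripMat n d k m ^ t) i j =
      if (∀ s : ℕ, s < t → k ≤ (i.val : ℤ) + 1 + s * d ∧ (i.val : ℤ) + 1 + s * d ≤ m) ∧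
         (j.val : ℤ) + 1 = (i.val : ℤ) + 1 + t * d then 1 else 0 := by
  induction t generalizing i with
  | zero =>
    simp only [pow_zero, Matrix.one_apply, Nat.not_lt_zero, IsEmpty.forall_iff, forall_const,
      true_and, Nat.cast_zero, zero_mul, add_zero]
    by_cases h : i = j
    · subst h; simp
    · rw [if_neg h, if_neg]
      intro hc
      exact h (Fin.ext (by omega)).symm
  | succ t ih =>
    rw [pow_succ', Matrix.mul_apply]
    by_cases hk : k ≤ (i.val : ℤ) + 1 ∧ (i.val : ℤ) + 1 ≤ m
    · have he0 : (0:ℤ) ≤ (i.val : ℤ) + d := by omega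
      have he1 : (i.val : ℤ) + d < n := by omega
      set l0 : Fin n := ⟨((i.val : ℤ) + d).toNat, by omega⟩ with hl0
      have hl0v : (l0.val : ℤ) = (i.val : ℤ) + d := by
        simp [hl0, Int.toNat_of_nonneg he0]
      rw [Finset.sum_eq_single_of_mem l0 (Finset.mem_univ l0) (by
        intro l _ hl
        rw [tripMat_apply, if_neg, zero_mul]
        rintro ⟨-, -, hc⟩
        exact hl (Fin.ext (by omega)))]
      rw [tripMat_apply, if_pos ⟨hk.1, hk.2, by omega⟩, one_mul, ih]
      congr 1
      apply propext
      constructor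
      · rintro ⟨ha, hb⟩
        rw [hl0v] at ha hb
        constructor
        · intro s hs
          match s with
          | 0 => simpa using hk
          | (s+1) =>
            have h' := ha s (by omega)
            push_cast
            constructor <;> linarith [h'.1, h'.2]
        · push_cast
          linarith [hb]
      · rintro ⟨ha, hb⟩
        rw [hl0v]
        constructor
        · intro s hs
          have h' := ha (s+1) (by omega)
          push_cast at h'
          constructor <;> linarith [h'.1, h'.2]
        · push_cast at hb
          linarith [hb]
    · rw [Finset.sum_eq_zero (fun l _ => by
        rw [tripMat_apply, if_neg (by tauto), zero_mul])]
      rw [if_neg]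
      rintro ⟨ha, -⟩
      have h0 := ha 0 (by omega)
      norm_num at h0
      exact hk ⟨h0.1, h0.2⟩

/-- a nonzero element ⟨d,k,m⟩ of M_n is idempotent if d = 0, and nilpotent
of index ℓ = 1 + ⌈(m−k+1)/|d|⌉ (with 2 ≤ ℓ ≤ n) if d ≠ 0. -/
theorem stmt_4 (n : ℕ) (hn : 2 ≤ n) (d k m : ℤ)
    (h1 : 1 - min 0 d ≤ k) (h2 : k ≤ m) (h3 : m ≤ (n : ℤ) - max 0 d) :
    (d = 0 → tripMat n d k m * tripMat n d k m = tripMat n d k m) ∧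
    (d ≠ 0 → ∀ ℓ : ℤ, ℓ = 1 + ⌈((m - k + 1 : ℤ) : ℚ) / ((|d| : ℤ) : ℚ)⌉ →
      tripMat n d k m ^ ℓ.toNat = 0 ∧
      tripMat n d k m ^ (ℓ.toNat - 1) ≠ 0 ∧
      2 ≤ ℓ ∧ ℓ ≤ (n : ℤ)) := by
  constructor
  · -- idempotent case
    intro hd
    subst hd
    ext i j
    have h := tripMat_pow_apply n 0 k m h1 h3 2 i j
    simp only [mul_zero, add_zero] at h
    rw [← pow_two, h, tripMat_apply]
    congr 1
    apply propext
    constructor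
    · rintro ⟨ha, hb⟩
      have := ha 0 (by omega)
      exact ⟨this.1, this.2, hb⟩
    · rintro ⟨ha, hb, hc⟩
      exact ⟨fun s _ => ⟨ha, hb⟩, hc⟩
  · intro hd ℓ hℓ
    obtain ⟨b, hbdef⟩ : ∃ b : ℤ, b = |d| := ⟨_, rfl⟩
    obtain ⟨a, hadef⟩ : ∃ a : ℤ, a = m - k + 1 := ⟨_, rfl⟩
    obtain ⟨q, hq⟩ : ∃ q : ℤ, q = ⌈((a : ℤ) : ℚ) / ((b : ℤ) : ℚ)⌉ := ⟨_, rfl⟩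
    have hℓq : ℓ = 1 + q := by rw [hℓ, hq, hadef, hbdef]
    have hb1 : 1 ≤ b := by rw [hbdef]; exact Int.one_le_abs hd
    have ha1 : 1 ≤ a := by omega
    have hbQ : (0:ℚ) < (b : ℚ) := by exact_mod_cast lt_of_lt_of_le zero_lt_one hb1
    have fact1 : a ≤ q * b := by
      have h' : ((a:ℤ):ℚ) ≤ (q:ℚ) * (b:ℚ) := by
        rw [hq]
        exact (div_le_iff₀ hbQ).mp (Int.le_ceil _)
      exact_mod_cast h'
    have fact2 : (q - 1) * b ≤ a - 1 := by
      have hlt : ((q:ℚ)) < ((a:ℤ):ℚ)/((b:ℤ):ℚ) + 1 := by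
        rw [hq]; exact_mod_cast Int.ceil_lt_add_one _
      have h' : ((q:ℚ) - 1) * (b:ℚ) < ((a:ℤ):ℚ) := by
        rw [← lt_div_iff₀ hbQ]; linarith
      have h'' : (q - 1) * b < a := by exact_mod_cast h'
      omega
    have fact3 : 1 ≤ q := by
      have h0a : (0:ℚ) < ((a:ℤ):ℚ) := by exact_mod_cast (by omega : (0:ℤ) < a)
      have : (0:ℤ) < ⌈((a : ℤ) : ℚ) / ((b : ℤ) : ℚ)⌉ :=
        Int.ceil_pos.mpr (div_pos h0a hbQ)
      omega
    have fact4 : q ≤ a := by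
      rw [hq]
      apply Int.ceil_le.mpr
      have h0a : (0:ℚ) ≤ ((a:ℤ):ℚ) := by exact_mod_cast (by omega : (0:ℤ) ≤ a)
      have h1b : (1:ℚ) ≤ ((b:ℤ):ℚ) := by exact_mod_cast hb1
      exact div_le_self h0a h1b
    have habs : b = max 0 d - min 0 d := by
      rcases abs_cases d with ⟨h', h''⟩ | ⟨h', h''⟩ <;> rw [hbdef, h'] <;> omega
    have hℓ2 : 2 ≤ ℓ := by omega
    have hmk : a ≤ (n : ℤ) - b := by omega
    have hℓn : ℓ ≤ (n : ℤ) := by omega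
    have hT : (ℓ.toNat : ℤ) = 1 + q := by omega
    have hc : ((ℓ.toNat - 1 : ℕ) : ℤ) = q := by omega
    refine ⟨?_, ?_, hℓ2, hℓn⟩
    · -- x ^ ℓ = 0
      ext i j
      rw [tripMat_pow_apply n d k m h1 h3 ℓ.toNat i j, if_neg, Matrix.zero_apply]
      rintro ⟨ha', -⟩
      have h0 := ha' 0 (by omega)
      have hL := ha' (ℓ.toNat - 1) (by omega)
      rw [hc] at hL
      norm_num at h0
      rcases abs_cases d with ⟨h', h''⟩ | ⟨h', h''⟩
      · -- 0 ≤ d, b = d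
        rw [h'] at hbdef
        rw [hbdef] at fact1
        linarith [h0.1, hL.2, fact1]
      · -- d < 0, b = -d
        rw [h'] at hbdef
        rw [hbdef] at fact1
        linarith [h0.2, hL.1, fact1]
    · -- x ^ (ℓ - 1) ≠ 0
      intro hzero
      have hqb : (q - 1) * b ≤ m - k := by linarith [fact2]
      rcases abs_cases d with ⟨h', h''⟩ | ⟨h', h''⟩
      · -- d > 0
        rw [h'] at hbdef
        have hd' : 0 < d := by omega
        have hk1 : 1 ≤ k := by omega
        have h3' : m ≤ (n : ℤ) - d := by omega
        have hqd : (q - 1) * d ≤ m - k := by rw [hbdef] at hqb; exact hqb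
        have hringd : (q - 1) * d = q * d - d := by ring
        have hqd0 : 0 ≤ (q - 1) * d := mul_nonneg (by omega) (by omega)
        have hkqd : k + q * d ≤ (n : ℤ) := by linarith [hqd, h3', hringd]
        have hkqd0 : (0:ℤ) ≤ k - 1 + q * d := by linarith [hqd0, hringd]
        have hi : ((k - 1).toNat : ℤ) = k - 1 := Int.toNat_of_nonneg (by omega)
        have hin : (k - 1).toNat < n := by omega
        have hj : ((k - 1 + q * d).toNat : ℤ) = k - 1 + q * d := Int.toNat_of_nonneg hkqd0
        have hjn : (k - 1 + q * d).toNat < n := by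
          have hx : ((k - 1 + q * d).toNat : ℤ) < (n : ℤ) := by rw [hj]; linarith [hkqd]
          exact_mod_cast hx
        have hentry := tripMat_pow_apply n d k m h1 h3 (ℓ.toNat - 1)
          ⟨(k-1).toNat, hin⟩ ⟨(k - 1 + q * d).toNat, hjn⟩
        simp only [Fin.val_mk] at hentry
        rw [hzero, Matrix.zero_apply, hi, hj, hc] at hentry
        have hcond : (∀ s : ℕ, s < ℓ.toNat - 1 →
            k ≤ k - 1 + 1 + (s:ℤ) * d ∧ k - 1 + 1 + (s:ℤ) * d ≤ m) ∧
            k - 1 + q * d + 1 = k - 1 + 1 + q * d := by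
          refine ⟨fun s hs => ?_, by ring⟩
          have hsq : (s : ℤ) ≤ q - 1 := by omega
          have hs0 : (0:ℤ) ≤ (s:ℤ) * d := mul_nonneg (by positivity) (by omega)
          have hsd : (s:ℤ) * d ≤ (q - 1) * d := mul_le_mul_of_nonneg_right hsq (by omega)
          exact ⟨by linarith, by linarith⟩
        rw [if_pos hcond] at hentry
        exact zero_ne_one hentry
      · -- d < 0
        rw [h'] at hbdef
        have hd' : d < 0 := h''
        have hkd : 1 - d ≤ k := by omega
        have hm : m ≤ (n : ℤ) := by omega
        have hqd : (q - 1) * (-d) ≤ m - k := by rw [hbdef] at hqb; exact hqb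
        have hmq : k + d ≤ m + q * d := by linarith [hqd]
        have hqd0 : q * d ≤ 0 := mul_nonpos_iff.mpr (Or.inl ⟨by omega, by omega⟩)
        have hi : ((m - 1).toNat : ℤ) = m - 1 := Int.toNat_of_nonneg (by omega)
        have hin : (m - 1).toNat < n := by omega
        have hj : ((m - 1 + q * d).toNat : ℤ) = m - 1 + q * d :=
          Int.toNat_of_nonneg (by linarith [hmq])
        have hjn : (m - 1 + q * d).toNat < n := by
          have hx : ((m - 1 + q * d).toNat : ℤ) < (n : ℤ) := by rw [hj]; linarith [hqd0]
          exact_mod_cast hx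
        have hentry := tripMat_pow_apply n d k m h1 h3 (ℓ.toNat - 1)
          ⟨(m-1).toNat, hin⟩ ⟨(m - 1 + q * d).toNat, hjn⟩
        simp only [Fin.val_mk] at hentry
        rw [hzero, Matrix.zero_apply, hi, hj, hc] at hentry
        have hcond : (∀ s : ℕ, s < ℓ.toNat - 1 →
            k ≤ m - 1 + 1 + (s:ℤ) * d ∧ m - 1 + 1 + (s:ℤ) * d ≤ m) ∧
            m - 1 + q * d + 1 = m - 1 + 1 + q * d := by
          refine ⟨fun s hs => ?_, by ring⟩
          have hsq : (s : ℤ) ≤ q - 1 := by omega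
          have hsd : (s:ℤ) * (-d) ≤ (q - 1) * (-d) := mul_le_mul_of_nonneg_right hsq (by omega)
          have hs0 : (0:ℤ) ≤ (s:ℤ) * (-d) := mul_nonneg (by positivity) (by omega)
          exact ⟨by linarith [hqd], by linarith⟩
        rw [if_pos hcond] at hentry
        exact zero_ne_one hentry
end

section
/- Let n ≥ 2, let j be a positive integer, and let x = ⟨d,k,m⟩ be a nonzero element of M_n. If y is any element of M_n with y^j = x, then j divides d and y = ⟨d/j, k + (j−1)·min(0,d/j), m + (j−1)·max(0,d/j)⟩. In particular, the j-th root of x in M_n, when it exists, is unique. -/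
open Matrix

lemma ite_eq_ite_nat {A B : Prop} [Decidable A] [Decidable B]
    (h : (if A then (1:ℕ) else 0) = if B then 1 else 0) : A ↔ B := by
  constructor <;> intro h' <;> by_contra hB <;> simp [h', hB] at h

lemma tripMat_mul_s7 (n : ℕ) (e a b d2 k2 m2 : ℤ)
    (ha : 1 - min 0 e ≤ a) (hb : b ≤ (n:ℤ) - max 0 e) :
    tripMat n e a b * tripMat n d2 k2 m2
      = tripMat n (e + d2) (max a (k2 - e)) (min b (m2 - e)) := by
  ext i l
  rw [Matrix.mul_apply]
  simp only [tripMat, Matrix.of_apply]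
  by_cases hC : max a (k2 - e) ≤ (i.val:ℤ) + 1 ∧ (i.val:ℤ) + 1 ≤ min b (m2 - e) ∧
      (l.val:ℤ) + 1 = (i.val:ℤ) + 1 + (e + d2)
  · rw [if_pos hC]
    have hj : ((i.val:ℤ) + e).toNat < n := by omega
    set c0 : Fin n := ⟨((i.val:ℤ)+e).toNat, hj⟩ with hc0
    have hv : (c0.val : ℤ) = (i.val:ℤ) + e := by
      rw [hc0]; simp only [Fin.val_mk]; omega
    rw [Finset.sum_eq_single c0]
    · rw [if_pos ⟨by omega, by omega, by omega⟩,
        if_pos ⟨by omega, by omega, by omega⟩]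
    · intro c _ hne
      by_cases hP : a ≤ (i.val:ℤ)+1 ∧ (i.val:ℤ)+1 ≤ b ∧ (c.val:ℤ)+1 = (i.val:ℤ)+1+e
      · exact absurd (Fin.ext (show c.val = c0.val by have := hP.2.2; omega)) hne
      · rw [if_neg hP, zero_mul]
    · intro h; exact absurd (Finset.mem_univ _) h
  · rw [if_neg hC]
    apply Finset.sum_eq_zero
    intro c _
    by_cases hP : a ≤ (i.val:ℤ)+1 ∧ (i.val:ℤ)+1 ≤ b ∧ (c.val:ℤ)+1 = (i.val:ℤ)+1+e
    · by_cases hQ : k2 ≤ (c.val:ℤ)+1 ∧ (c.val:ℤ)+1 ≤ m2 ∧ (l.val:ℤ)+1 = (c.val:ℤ)+1+d2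
      · exact absurd ⟨by omega, by omega, by omega⟩ hC
      · rw [if_neg hQ, mul_zero]
    · rw [if_neg hP, zero_mul]

lemma tripMat_pow_s7 (n : ℕ) (e a b : ℤ) (ha : 1 - min 0 e ≤ a) (hb : b ≤ (n:ℤ) - max 0 e)
    (p : ℕ) :
    (tripMat n e a b) ^ (p + 1)
      = tripMat n (((p:ℤ) + 1) * e) (a - (p:ℤ) * min 0 e) (b - (p:ℤ) * max 0 e) := by
  induction p with
  | zero => norm_num
  | succ p ih =>
    rw [pow_succ', ih, tripMat_mul_s7 n e a b _ _ _ ha hb]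
    have e2 : max a (a - (p:ℤ) * min 0 e - e) = a - ((p:ℤ) + 1) * min 0 e := by
      rcases le_or_gt 0 e with h | h
      · rw [min_eq_left h, max_eq_left (by linarith)]; ring
      · rw [min_eq_right h.le]
        have hpe : (p:ℤ) * e ≤ 0 := mul_nonpos_of_nonneg_of_nonpos (by positivity) h.le
        rw [max_eq_right (by linarith)]; ring
    have e3 : min b (b - (p:ℤ) * max 0 e - e) = b - ((p:ℤ) + 1) * max 0 e := by
      rcases le_or_gt 0 e with h | h
      · rw [max_eq_right h]
        have hpe : 0 ≤ (p:ℤ) * e := mul_nonneg (by positivity) h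
        rw [min_eq_right (by linarith)]; ring
      · rw [max_eq_left h.le, min_eq_left (by linarith)]; ring
    rw [e2, e3]
    have e1 : e + ((p:ℤ) + 1) * e = (((p:ℕ)+1 : ℕ) + 1 : ℤ) * e := by push_cast; ring
    rw [e1]
    push_cast
    ring_nf

lemma tripMat_ne_zero (n : ℕ) (d k m : ℤ) (h1 : 1 - min 0 d ≤ k) (h2 : k ≤ m)
    (h3 : m ≤ (n:ℤ) - max 0 d) : tripMat n d k m ≠ 0 := by
  intro h
  have hr : (k-1).toNat < n := by omega
  have hc : (k+d-1).toNat < n := by omega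
  have h0 := congrFun (congrFun h ⟨(k-1).toNat, hr⟩) ⟨(k+d-1).toNat, hc⟩
  simp only [tripMat, Matrix.of_apply, Matrix.zero_apply, Fin.val_mk] at h0
  rw [if_pos ⟨by omega, by omega, by omega⟩] at h0
  exact one_ne_zero h0

lemma tripMat_inj (n : ℕ) (D K M d k m : ℤ)
    (hK : 1 - min 0 D ≤ K) (hM : M ≤ (n:ℤ) - max 0 D)
    (h1 : 1 - min 0 d ≤ k) (h2 : k ≤ m) (h3 : m ≤ (n:ℤ) - max 0 d)
    (hEq : tripMat n D K M = tripMat n d k m) :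
    D = d ∧ K = k ∧ M = m := by
  have E : ∀ p q : ℕ, p < n → q < n →
      ((K ≤ (p:ℤ)+1 ∧ (p:ℤ)+1 ≤ M ∧ (q:ℤ)+1 = (p:ℤ)+1+D) ↔
       (k ≤ (p:ℤ)+1 ∧ (p:ℤ)+1 ≤ m ∧ (q:ℤ)+1 = (p:ℤ)+1+d)) := by
    intro p q hp hq
    have h0 := congrFun (congrFun hEq ⟨p, hp⟩) ⟨q, hq⟩
    simp only [tripMat, Matrix.of_apply, Fin.val_mk] at h0
    exact ite_eq_ite_nat h0
  -- row k, column k+d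
  obtain ⟨s1a, s1b, s1c⟩ := (E (k-1).toNat (k+d-1).toNat (by omega) (by omega)).mpr
    ⟨by omega, by omega, by omega⟩
  have hDd : D = d := by omega
  have hKk : K ≤ k := by omega
  have hkM : k ≤ M := by omega
  -- row K, column K+D
  obtain ⟨s2a, s2b, s2c⟩ := (E (K-1).toNat (K+D-1).toNat (by omega) (by omega)).mp
    ⟨by omega, by omega, by omega⟩
  -- row M, column M+D
  obtain ⟨s3a, s3b, s3c⟩ := (E (M-1).toNat (M+D-1).toNat (by omega) (by omega)).mp
    ⟨by omega, by omega, by omega⟩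
  -- row m, column m+d
  obtain ⟨s4a, s4b, s4c⟩ := (E (m-1).toNat (m+d-1).toNat (by omega) (by omega)).mpr
    ⟨by omega, by omega, by omega⟩
  exact ⟨hDd, by omega, by omega⟩

/-- if y ∈ M_n satisfies y^j = ⟨d,k,m⟩ ≠ 0, then j divides d and y is the
explicitly given triplet; hence the j-th root in M_n, when it exists, is unique. -/
theorem stmt_7 (n : ℕ) (hn : 2 ≤ n) (j : ℕ) (hj : 1 ≤ j) (d k m : ℤ)
    (h1 : 1 - min 0 d ≤ k) (h2 : k ≤ m) (h3 : m ≤ (n : ℤ) - max 0 d)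
    (y : Matrix (Fin n) (Fin n) ℕ) (hy : y ∈ MSet n)
    (hroot : y ^ j = tripMat n d k m) :
    (j : ℤ) ∣ d ∧
    y = tripMat n (d / (j : ℤ))
          (k + ((j : ℤ) - 1) * min 0 (d / (j : ℤ)))
          (m + ((j : ℤ) - 1) * max 0 (d / (j : ℤ))) := by
  have hne : tripMat n d k m ≠ 0 := tripMat_ne_zero n d k m h1 h2 h3
  simp only [MSet, Set.mem_union, Set.mem_singleton_iff, Set.mem_setOf_eq] at hy
  rcases hy with hy0 | ⟨e, a, b, hea, hab, hbn, rfl⟩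
  · rw [hy0, zero_pow (by omega : j ≠ 0)] at hroot
    exact absurd hroot.symm hne
  · obtain ⟨p, rfl⟩ : ∃ p : ℕ, j = p + 1 := ⟨j - 1, by omega⟩
    rw [tripMat_pow_s7 n e a b hea hbn p] at hroot
    have hmin : min 0 (((p:ℤ)+1)*e) = ((p:ℤ)+1) * min 0 e := by
      rcases le_or_gt 0 e with h | h
      · rw [min_eq_left h, min_eq_left (mul_nonneg (by positivity) h), mul_zero]
      · rw [min_eq_right h.le,
          min_eq_right (mul_nonpos_of_nonneg_of_nonpos (by positivity) h.le)]
    have hmax : max 0 (((p:ℤ)+1)*e) = ((p:ℤ)+1) * max 0 e := by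
      rcases le_or_gt 0 e with h | h
      · rw [max_eq_right h, max_eq_right (mul_nonneg (by positivity) h)]
      · rw [max_eq_left h.le,
          max_eq_left (mul_nonpos_of_nonneg_of_nonpos (by positivity) h.le), mul_zero]
    obtain ⟨hD, hKk, hMm⟩ := tripMat_inj n (((p:ℤ)+1)*e) (a - (p:ℤ)*min 0 e)
      (b - (p:ℤ)*max 0 e) d k m
      (by rw [hmin]; linarith) (by rw [hmax]; linarith) h1 h2 h3 hroot
    refine ⟨⟨e, by rw [← hD]; push_cast; ring⟩, ?_⟩
    have hdiv : d / (((p:ℕ)+1 : ℕ) : ℤ) = e := by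
      rw [← hD]; push_cast
      exact Int.mul_ediv_cancel_left e (by positivity)
    rw [hdiv]
    have e1 : k + ((((p:ℕ)+1:ℕ):ℤ) - 1) * min 0 e = a := by push_cast; linarith
    have e2 : m + ((((p:ℕ)+1:ℕ):ℤ) - 1) * max 0 e = b := by push_cast; linarith
    rw [e1, e2]
end

section
/- Let n ≥ 2 and define A_n = {⟨1,k,m⟩ : 1 ≤ k ≤ m ≤ n−1}. Then every element of the semigroup SUT_n = {0} ∪ {⟨d,k,m⟩ : d ≥ 1} is a power of an element of A_n: the zero matrix equals ⟨1,1,1⟩², and every nonzero x = ⟨d,k,m⟩ ∈ SUT_n satisfies x = ⟨1, k, m+d−1⟩^d with ⟨1, k, m+d−1⟩ ∈ A_n. In particular A_n is a generating set of the semigroup SUT_n. -/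
open Matrix

def SUTSet (n : ℕ) : Set (Matrix (Fin n) (Fin n) ℕ) :=
  {0} ∪ {x | ∃ d k m : ℤ, 1 ≤ d ∧
    1 - min 0 d ≤ k ∧ k ≤ m ∧ m ≤ (n : ℤ) - max 0 d ∧ x = tripMat n d k m}

def ASet (n : ℕ) : Set (Matrix (Fin n) (Fin n) ℕ) :=
  {x | ∃ k m : ℤ, 1 ≤ k ∧ k ≤ m ∧ m ≤ (n : ℤ) - 1 ∧ x = tripMat n 1 k m}

lemma trip_mul (n : ℕ) (k M : ℤ) (t : ℕ) :
    tripMat n (t : ℤ) k (M - t + 1) * tripMat n 1 k M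
      = tripMat n ((t : ℤ) + 1) k (M - t) := by
  ext i j
  rw [Matrix.mul_apply]
  simp only [tripMat, of_apply]
  by_cases h : k ≤ (i.val : ℤ) + 1 ∧ (i.val : ℤ) + 1 ≤ M - t ∧
      (j.val : ℤ) + 1 = (i.val : ℤ) + 1 + ((t : ℤ) + 1)
  · rw [if_pos h]
    have hl : i.val + t < n := by omega
    rw [Finset.sum_eq_single (⟨i.val + t, hl⟩ : Fin n)]
    · have h1 : k ≤ (i.val : ℤ) + 1 ∧ (i.val : ℤ) + 1 ≤ M - t + 1 ∧
          ((i.val + t : ℕ) : ℤ) + 1 = (i.val : ℤ) + 1 + t := by push_cast; omega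
      have h2 : k ≤ ((i.val + t : ℕ) : ℤ) + 1 ∧ ((i.val + t : ℕ) : ℤ) + 1 ≤ M ∧
          (j.val : ℤ) + 1 = ((i.val + t : ℕ) : ℤ) + 1 + 1 := by push_cast; omega
      rw [if_pos h1, if_pos h2]
    · intro l _ hne
      rcases Decidable.em (k ≤ (i.val : ℤ) + 1 ∧ (i.val : ℤ) + 1 ≤ M - t + 1 ∧
          (l.val : ℤ) + 1 = (i.val : ℤ) + 1 + t) with hP | hP
      · exfalso; apply hne; apply Fin.ext; simp only [Fin.val_mk]; omega
      · rw [if_neg hP, zero_mul]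
    · intro h'; exact absurd (Finset.mem_univ _) h'
  · rw [if_neg h]
    apply Finset.sum_eq_zero
    intro l _
    rcases Decidable.em (k ≤ (i.val : ℤ) + 1 ∧ (i.val : ℤ) + 1 ≤ M - t + 1 ∧
        (l.val : ℤ) + 1 = (i.val : ℤ) + 1 + t) with hP | hP
    · rcases Decidable.em (k ≤ (l.val : ℤ) + 1 ∧ (l.val : ℤ) + 1 ≤ M ∧
          (j.val : ℤ) + 1 = (l.val : ℤ) + 1 + 1) with hQ | hQ
      · exfalso; exact h ⟨hP.1, by omega, by omega⟩
      · rw [if_neg hQ, mul_zero]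
    · rw [if_neg hP, zero_mul]

lemma trip_pow (n : ℕ) (k M : ℤ) (t : ℕ) (ht : 1 ≤ t) :
    tripMat n 1 k M ^ t = tripMat n (t : ℤ) k (M - t + 1) := by
  induction t with
  | zero => omega
  | succ s ih =>
    rcases Nat.eq_or_lt_of_le ht with h1 | h1
    · simp only [← h1]
      norm_num
    · have hs : 1 ≤ s := by omega
      rw [pow_succ, ih hs, trip_mul]
      push_cast
      ring_nf

/-- every element of SUT_n is a power of an element of
A_n = {⟨1,k,m⟩ : 1 ≤ k ≤ m ≤ n−1}: explicitly 0 = ⟨1,1,1⟩² and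
⟨d,k,m⟩ = ⟨1,k,m+d−1⟩^d; in particular A_n generates SUT_n. -/
theorem stmt_16 (n : ℕ) (hn : 2 ≤ n) :
    (0 : Matrix (Fin n) (Fin n) ℕ) = tripMat n 1 1 1 ^ 2 ∧
    (∀ d k m : ℤ, 1 ≤ d → 1 ≤ k → k ≤ m → m ≤ (n : ℤ) - d →
      tripMat n d k m = tripMat n 1 k (m + d - 1) ^ d.toNat ∧
      tripMat n 1 k (m + d - 1) ∈ ASet n) ∧
    (∀ x ∈ SUTSet n, ∃ y ∈ ASet n, ∃ j : ℕ, 1 ≤ j ∧ x = y ^ j) := by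
  have hA111 : tripMat n 1 1 1 ∈ ASet n := by
    exact ⟨1, 1, le_refl _, le_refl _, by omega, rfl⟩
  have h0 : (0 : Matrix (Fin n) (Fin n) ℕ) = tripMat n 1 1 1 ^ 2 := by
    rw [trip_pow n 1 1 2 (by norm_num)]
    ext i j
    simp only [tripMat, of_apply, Matrix.zero_apply]
    rw [if_neg]; omega
  have hmain : ∀ d k m : ℤ, 1 ≤ d → 1 ≤ k → k ≤ m → m ≤ (n : ℤ) - d →
      tripMat n d k m = tripMat n 1 k (m + d - 1) ^ d.toNat ∧
      tripMat n 1 k (m + d - 1) ∈ ASet n := by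
    intro d k m hd hk hkm hm
    constructor
    · rw [trip_pow n k (m + d - 1) d.toNat (by omega)]
      have : (d.toNat : ℤ) = d := Int.toNat_of_nonneg (by omega)
      rw [this]
      ring_nf
    · exact ⟨k, m + d - 1, hk, by omega, by omega, rfl⟩
  refine ⟨h0, hmain, ?_⟩
  intro x hx
  rcases hx with hx | ⟨d, k, m, hd, hk, hkm, hm, rfl⟩
  · rw [Set.mem_singleton_iff] at hx; subst hx
    exact ⟨tripMat n 1 1 1, hA111, 2, by norm_num, h0⟩
  · have hmin : min 0 d = 0 := by omega
    have hmax : max 0 d = d := by omega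
    rw [hmin] at hk; rw [hmax] at hm
    obtain ⟨heq, hmem⟩ := hmain d k m hd (by omega) hkm hm
    exact ⟨_, hmem, d.toNat, by omega, heq⟩
end

section
/- Let n ≥ 2 and let A_n = {⟨1,k,m⟩ : 1 ≤ k ≤ m ≤ n−1} ⊆ SUT_n. Then: (i) every subset B of SUT_n that generates SUT_n as a semigroup (i.e., every element of SUT_n is a finite product of elements of B) satisfies A_n ⊆ B; (ii) A_n itself generates SUT_n; and (iii) A_n has cardinality n(n−1)/2. Consequently the rank of the semigroup SUT_n (the minimal cardinality of a generating set) equals n(n−1)/2. -/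
open Matrix

/-- B generates SUT_n: every element of SUT_n is a finite nonempty product of elements
of B. -/
def GeneratesSUT (n : ℕ) (B : Set (Matrix (Fin n) (Fin n) ℕ)) : Prop :=
  ∀ x ∈ SUTSet n, ∃ l : List (Matrix (Fin n) (Fin n) ℕ),
    l ≠ [] ∧ (∀ y ∈ l, y ∈ B) ∧ l.prod = x

/- ### Auxiliary lemmas -/

lemma trip_mul_s18 (n : ℕ) (d k m : ℤ) (hd : 1 ≤ d) (hk : 1 ≤ k) (hm : m ≤ (n:ℤ) - d) :
    tripMat n d k m * tripMat n 1 (k + d) (m + d) = tripMat n (d + 1) k m := by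
  ext i j
  rw [Matrix.mul_apply]
  simp only [tripMat, Matrix.of_apply]
  by_cases h : k ≤ (i.val:ℤ) + 1 ∧ (i.val:ℤ) + 1 ≤ m
  · have hl : ((i.val:ℤ) + d).toNat < n := by omega
    rw [Finset.sum_eq_single (⟨((i.val:ℤ) + d).toNat, hl⟩ : Fin n)]
    · rw [if_pos ⟨h.1, h.2, by simp; omega⟩, one_mul]
      have hiff : ((k + d ≤ ((((i.val:ℤ) + d).toNat : ℤ)) + 1 ∧
          ((((i.val:ℤ) + d).toNat : ℤ)) + 1 ≤ m + d ∧
          (j.val : ℤ) + 1 = ((((i.val:ℤ) + d).toNat : ℤ)) + 1 + 1) ↔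
          (k ≤ (i.val:ℤ) + 1 ∧ (i.val:ℤ) + 1 ≤ m ∧ (j.val:ℤ) + 1 = (i.val:ℤ) + 1 + (d+1))) := by
        constructor <;> intro hc <;> refine ⟨by omega, by omega, by omega⟩
      simp only [hiff]
    · intro b _ hb
      rw [if_neg, zero_mul]
      intro hc
      apply hb
      apply Fin.ext
      simp only [Fin.val_mk]
      omega
    · intro habs; exact absurd (Finset.mem_univ _) habs
  · rw [if_neg (by tauto)]
    apply Finset.sum_eq_zero
    intro l _
    rw [if_neg (by tauto), zero_mul]

def SUT' {n : ℕ} (x : Matrix (Fin n) (Fin n) ℕ) : Prop :=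
  ∀ i j, x i j ≠ 0 → i.val + 1 ≤ j.val

lemma sut_mem {n : ℕ} {x : Matrix (Fin n) (Fin n) ℕ} (hx : x ∈ SUTSet n) : SUT' x := by
  rcases hx with h | ⟨d, k, m, hd, h1, h2, h3, rfl⟩
  · intro i j hij
    simp only [Set.mem_singleton_iff] at h
    subst h
    simp at hij
  · intro i j hij
    simp only [tripMat, Matrix.of_apply] at hij
    split_ifs at hij with hc
    · omega
    · omega

lemma sut_mul {n : ℕ} {M N : Matrix (Fin n) (Fin n) ℕ} (hM : SUT' M) (hN : SUT' N)
    (i j : Fin n) (h : (M * N) i j ≠ 0) : i.val + 2 ≤ j.val := by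
  rw [Matrix.mul_apply] at h
  obtain ⟨l, -, hl⟩ := Finset.exists_ne_zero_of_sum_ne_zero h
  rw [mul_ne_zero_iff] at hl
  have h1 := hM i l hl.1
  have h2 := hN l j hl.2
  omega

lemma sut_prod {n : ℕ} : ∀ (l : List (Matrix (Fin n) (Fin n) ℕ)), l ≠ [] →
    (∀ y ∈ l, SUT' y) → SUT' l.prod
  | [], h, _ => absurd rfl h
  | [y], _, hy => by simpa using hy y (by simp)
  | y :: z :: r, _, hy => by
    rw [List.prod_cons]
    intro i j hij
    have h1 : SUT' y := hy y (by simp)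
    have h2 : SUT' (z :: r).prod := sut_prod (z :: r) (by simp)
      (fun w hw => hy w (List.mem_cons_of_mem _ hw))
    have := sut_mul h1 h2 i j hij
    omega

lemma trip_le {n : ℕ} {k m k' m' a : ℤ} (ha1 : 1 ≤ a) (ha2 : a ≤ (n:ℤ) - 1)
    (hka : k ≤ a) (ham : a ≤ m)
    (h : tripMat n 1 k m = tripMat n 1 k' m') : k' ≤ a ∧ a ≤ m' := by
  have hi : (a - 1).toNat < n := by omega
  have hj : a.toNat < n := by omega
  have he := congrFun (congrFun h ⟨(a-1).toNat, hi⟩) ⟨a.toNat, hj⟩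
  simp only [tripMat, Matrix.of_apply, Fin.val_mk] at he
  rw [if_pos ⟨by omega, by omega, by omega⟩] at he
  split_ifs at he with h2
  all_goals omega

lemma trip_inj {n : ℕ} {k m k' m' : ℤ} (hk : 1 ≤ k) (hkm : k ≤ m) (hmn : m ≤ (n:ℤ) - 1)
    (hk' : 1 ≤ k') (hkm' : k' ≤ m') (hmn' : m' ≤ (n:ℤ) - 1)
    (h : tripMat n 1 k m = tripMat n 1 k' m') : k = k' ∧ m = m' := by
  have a1 := trip_le hk (by omega) le_rfl hkm h
  have a2 := trip_le (by omega) hmn hkm le_rfl h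
  have a3 := trip_le hk' (by omega) le_rfl hkm' h.symm
  have a4 := trip_le (by omega) hmn' hkm' le_rfl h.symm
  omega

lemma gauss (N : ℕ) : (∑ b ∈ Finset.range N, (b+1)) * 2 = N * (N+1) := by
  induction N with
  | zero => simp
  | succ N ih => rw [Finset.sum_range_succ, add_mul, ih]; ring

lemma prod_range (n : ℕ) (k m : ℤ) (hk : 1 ≤ k) :
    ∀ s : ℕ, 1 ≤ s → m ≤ (n:ℤ) - s →
    ((List.range s).map (fun j : ℕ => tripMat n 1 (k + (j:ℤ)) (m + (j:ℤ)))).prod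
      = tripMat n s k m := by
  intro s
  induction s with
  | zero => omega
  | succ s ih =>
    intro _ hms
    by_cases hs : s = 0
    · subst hs
      rw [show (0:ℕ)+1 = 1 from rfl, show List.range 1 = [0] from rfl, List.map_singleton,
        List.prod_singleton]
      norm_num
    · rw [List.range_succ, List.map_append, List.prod_append]
      rw [ih (by omega) (by push_cast at hms ⊢; omega)]
      simp only [List.map_cons, List.map_nil, List.prod_cons, List.prod_nil, mul_one]
      have := trip_mul_s18 n s k m (by omega) hk (by push_cast at hms ⊢; omega)
      rw [this]
      push_cast
      ring_nf

lemma trip_sq_zero (n : ℕ) :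
    tripMat n 1 1 1 * tripMat n 1 1 1 = 0 := by
  ext i j
  rw [Matrix.mul_apply]
  simp only [tripMat, Matrix.of_apply, Matrix.zero_apply]
  apply Finset.sum_eq_zero
  intro l _
  split_ifs <;> omega

/-- A_n is contained in every generating subset of SUT_n, A_n generates
SUT_n, |A_n| = n(n−1)/2, and the rank of SUT_n equals n(n−1)/2. -/
theorem stmt_18 (n : ℕ) (hn : 2 ≤ n) :
    (∀ B ⊆ SUTSet n, GeneratesSUT n B → ASet n ⊆ B) ∧
    ASet n ⊆ SUTSet n ∧ GeneratesSUT n (ASet n) ∧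
    (ASet n).ncard = n * (n - 1) / 2 ∧
    sInf {c : ℕ∞ | ∃ B ⊆ SUTSet n, GeneratesSUT n B ∧ B.encard = c} =
      ((n * (n - 1) / 2 : ℕ) : ℕ∞) := by
  -- A ⊆ SUT
  have hA_sub : ASet n ⊆ SUTSet n := by
    rintro x ⟨k, m, hk, hkm, hm, rfl⟩
    exact Or.inr ⟨1, k, m, le_rfl, by omega, hkm, by omega, rfl⟩
  -- A generates SUT
  have hA_gen : GeneratesSUT n (ASet n) := by
    intro x hx
    rcases hx with h0 | ⟨d, k, m, hd, h1, h2, h3, rfl⟩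
    · refine ⟨[tripMat n 1 1 1, tripMat n 1 1 1], by simp, ?_, ?_⟩
      · intro y hy
        simp only [List.mem_cons, List.not_mem_nil, or_false] at hy
        rcases hy with rfl | rfl <;>
          exact ⟨1, 1, le_rfl, le_rfl, by omega, rfl⟩
      · simp only [Set.mem_singleton_iff] at h0
        rw [List.prod_cons, List.prod_singleton, trip_sq_zero n]
        exact h0.symm
    · rw [min_eq_left (by omega : (0:ℤ) ≤ d)] at h1
      rw [max_eq_right (by omega : (0:ℤ) ≤ d)] at h3
      have hk1 : 1 ≤ k := by omega
      have hm1 : m ≤ (n:ℤ) - d := by omega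
      refine ⟨(List.range d.toNat).map
        (fun j : ℕ => tripMat n 1 (k + (j:ℤ)) (m + (j:ℤ))), ?_, ?_, ?_⟩
      · simp only [ne_eq, List.map_eq_nil_iff, List.range_eq_nil]
        omega
      · intro y hy
        simp only [List.mem_map, List.mem_range] at hy
        obtain ⟨j, hj, rfl⟩ := hy
        exact ⟨k + j, m + j, by omega, by omega, by omega, rfl⟩
      · rw [prod_range n k m hk1 d.toNat (by omega) (by omega)]
        have e : ((d.toNat : ℤ)) = d := by omega
        rw [e]
  -- A is contained in any generating set
  have hpart1 : ∀ B ⊆ SUTSet n, GeneratesSUT n B → ASet n ⊆ B := by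
    intro B hBsub hBgen x hx
    obtain ⟨k, m, hk, hkm, hmn, rfl⟩ := hx
    obtain ⟨l, hlne, hlB, hlprod⟩ := hBgen _ (hA_sub ⟨k, m, hk, hkm, hmn, rfl⟩)
    rcases l with _ | ⟨y, _ | ⟨z, r⟩⟩
    · exact absurd rfl hlne
    · rw [List.prod_singleton] at hlprod
      rw [← hlprod]
      exact hlB y (by simp)
    · exfalso
      rw [List.prod_cons] at hlprod
      have hy : SUT' y := sut_mem (hBsub (hlB y (by simp)))
      have hz : SUT' (z :: r).prod := sut_prod (z :: r) (by simp)
        (fun w hw => sut_mem (hBsub (hlB w (List.mem_cons_of_mem _ hw))))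
      have hi : (k-1).toNat < n := by omega
      have hj : k.toNat < n := by omega
      have hne : (y * (z :: r).prod) ⟨(k-1).toNat, hi⟩ ⟨k.toNat, hj⟩ ≠ 0 := by
        rw [hlprod]
        simp only [tripMat, Matrix.of_apply, Fin.val_mk]
        rw [if_pos ⟨by omega, by omega, by omega⟩]
        exact one_ne_zero
      have := sut_mul hy hz _ _ hne
      simp only [Fin.val_mk] at this
      omega
  -- the finite set realizing ASet
  set f : ℕ → Finset (Matrix (Fin n) (Fin n) ℕ) :=
    fun b => (Finset.range (b+1)).image
      (fun a : ℕ => tripMat n 1 ((a:ℤ)+1) ((b:ℤ)+1)) with hf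
  set F : Finset (Matrix (Fin n) (Fin n) ℕ) := (Finset.range (n-1)).biUnion f with hF
  have hinner : ∀ b, b < n - 1 → (f b).card = b + 1 := by
    intro b hb
    rw [hf]
    rw [Finset.card_image_of_injOn, Finset.card_range]
    intro a1 h1 a2 h2 he
    simp only [Finset.coe_range, Set.mem_Iio] at h1 h2
    have := trip_inj (n := n) (by omega) (by omega) (by omega)
      (by omega) (by omega) (by omega) he
    omega
  have hdisj : ∀ b1 ∈ Finset.range (n-1), ∀ b2 ∈ Finset.range (n-1),
      b1 ≠ b2 → Disjoint (f b1) (f b2) := by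
    intro b1 hb1 b2 hb2 hne
    simp only [Finset.mem_range] at hb1 hb2
    rw [Finset.disjoint_left]
    intro x hx1 hx2
    simp only [hf, Finset.mem_image, Finset.mem_range] at hx1 hx2
    obtain ⟨a1, ha1, rfl⟩ := hx1
    obtain ⟨a2, ha2, he⟩ := hx2
    have := trip_inj (n := n) (by omega) (by omega) (by omega)
      (by omega) (by omega) (by omega) he
    omega
  have hcard : F.card = n * (n - 1) / 2 := by
    rw [hF, Finset.card_biUnion hdisj]
    have e1 : ∑ b ∈ Finset.range (n-1), (f b).card
        = ∑ b ∈ Finset.range (n-1), (b+1) :=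
      Finset.sum_congr rfl (fun b hb => hinner b (Finset.mem_range.mp hb))
    rw [e1]
    have h2 := gauss (n-1)
    have h3 : (n-1) * (n-1+1) = n * (n-1) := by
      have : n - 1 + 1 = n := by omega
      rw [this, Nat.mul_comm]
    rw [h3] at h2
    obtain ⟨t, ht⟩ : ∃ t, n * (n-1) = t := ⟨_, rfl⟩
    rw [ht] at h2 ⊢
    omega
  have hset : ASet n = ↑F := by
    ext x
    constructor
    · rintro ⟨k, m, hk, hkm, hmn, rfl⟩
      rw [Finset.mem_coe, hF, Finset.mem_biUnion]
      refine ⟨(m-1).toNat, Finset.mem_range.mpr (by omega), ?_⟩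
      rw [hf]
      refine Finset.mem_image.mpr ⟨(k-1).toNat, Finset.mem_range.mpr (by omega), ?_⟩
      have e1 : (((k-1).toNat : ℤ)) + 1 = k := by omega
      have e2 : (((m-1).toNat : ℤ)) + 1 = m := by omega
      rw [e1, e2]
    · intro hx
      rw [Finset.mem_coe, hF, Finset.mem_biUnion] at hx
      obtain ⟨b, hb, hx⟩ := hx
      rw [hf] at hx
      obtain ⟨a, ha, rfl⟩ := Finset.mem_image.mp hx
      simp only [Finset.mem_range] at hb ha
      exact ⟨(a:ℤ)+1, (b:ℤ)+1, by omega, by omega, by omega, rfl⟩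
  have hencard : (ASet n).encard = ((n * (n - 1) / 2 : ℕ) : ℕ∞) := by
    rw [hset, Set.encard_coe_eq_coe_finsetCard, hcard]
  refine ⟨hpart1, hA_sub, hA_gen, ?_, ?_⟩
  · rw [hset, Set.ncard_coe_finset, hcard]
  · apply le_antisymm
    · exact sInf_le ⟨ASet n, hA_sub, hA_gen, hencard⟩
    · rw [le_sInf_iff]
      rintro c ⟨B, hB, hBgen, rfl⟩
      rw [← hencard]
      exact Set.encard_mono (hpart1 B hB hBgen)
end
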